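/- arXiv:1612.09100 — 3 statements merged into one kernel-verified Lean document; each statement's English description precedes it below -/
import Mathlib

section
/- Let A be a complex Banach algebra and let X, Y ∈ A satisfy X*Y − Y*X = s • Y for some constant s ∈ ℂ with s ≠ 0. Let α, β ∈ ℂ be such that Complex.exp (−α * s) ≠ 1. Then exp(α • X) * exp(β • Y) = exp(α • X + ((α * s / (1 − Complex.exp (−α * s))) * β) • Y). -/
/-!
Put `σ = α s`, so that `[αX, Y] = σ Y`. Then `Y (αX + σ) = αX Y`, hence
`exp(αX) exp(μY) = exp(e^σ μ Y) exp(αX)`; and `t ↦ exp(tY) αX exp(-tY) + tσ Y` has zero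
derivative, so `exp(lY) αX = (αX - σ l Y) exp(lY)`. For `l = β / (e^{-σ} - 1)` the element
`αX - σ l Y` is the exponent on the right-hand side, and
`exp(lY) exp(αX) exp(-lY) = exp(αX) exp((e^{-σ} - 1) l Y) = exp(αX) exp(βY)`.
-/

open NormedSpace

section

variable {A : Type*} [NormedRing A]

theorem exp_mul_exp_neg [NormedAlgebra ℚ A] [CompleteSpace A] (x : A) :
    exp x * exp (-x) = 1 := by
  let := invertibleExp x
  rw [← invOf_exp, mul_invOf_self]

theorem exp_neg_mul_exp [NormedAlgebra ℚ A] [CompleteSpace A] (x : A) :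
    exp (-x) * exp x = 1 := by
  let := invertibleExp x
  rw [← invOf_exp, invOf_mul_self]

variable [NormedAlgebra ℂ A] [CompleteSpace A] {a b : A} {σ : ℂ}

theorem exp_mul_exp_smul_eq_exp_smul_mul_exp (h : a * b - b * a = σ • b) (μ : ℂ) :
    exp a * exp (μ • b) = exp ((Complex.exp σ * μ) • b) * exp a := by
  let : NormedAlgebra ℚ A := .restrictScalars ℚ ℂ A
  have hshift : SemiconjBy b (a + algebraMap ℂ A σ) a := by
    rw [SemiconjBy, mul_add, ← Algebra.commutes, ← Algebra.smul_def, ← h]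
    abel
  have hexp : exp a * b = Complex.exp σ • (b * exp a) := by
    rw [← hshift.exp_right.eq, exp_add_of_commute (Algebra.commutes σ a).symm,
      ← algebraMap_exp_comm, ← Complex.exp_eq_exp_ℂ, ← mul_assoc, ← Algebra.commutes,
      ← Algebra.smul_def]
  refine SemiconjBy.exp_right ?_
  rw [SemiconjBy, mul_smul_comm, hexp, smul_smul, smul_mul_assoc, mul_comm]

theorem exp_mul_eq_sub_smul_mul_exp (h : a * b - b * a = σ • b) :
    exp b * a = (a - σ • b) * exp b := by
  let : NormedAlgebra ℚ A := .restrictScalars ℚ ℂ A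
  have hinv (t : ℂ) : exp (t • b) * exp (t • -b) = 1 := by
    rw [smul_neg, exp_mul_exp_neg]
  let f : ℂ → A := fun t ↦ exp (t • b) * a * exp (t • -b) + (t * σ) • b
  have hf (t : ℂ) : HasDerivAt f 0 t := by
    refine ((((hasDerivAt_exp_smul_const b t).mul_const a).fun_mul
      (hasDerivAt_exp_smul_const' (-b) t)).fun_add
      (((hasDerivAt_id t).mul_const σ).smul_const b)).congr_deriv ?_
    have hcomm : exp (t • b) * b = b * exp (t • b) :=
      ((Commute.refl b).smul_right t).exp_right.eq.symm
    calc _ = exp (t • b) * (b * a - a * b) * exp (t • -b) + σ • b := by noncomm_ring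
      _ = 0 := by
        rw [← neg_sub, h, mul_neg, neg_mul, mul_smul_comm, hcomm, smul_mul_assoc, mul_assoc,
          hinv, mul_one, neg_add_cancel]
  have hconj : f 1 = f 0 :=
    is_const_of_deriv_eq_zero (fun t ↦ (hf t).differentiableAt) (fun t ↦ (hf t).deriv) 1 0
  simp only [f, one_smul, zero_smul, exp_zero, one_mul, mul_one, zero_mul, add_zero] at hconj
  rw [← eq_sub_iff_add_eq.mpr hconj, mul_assoc _ (exp (-b)), exp_neg_mul_exp, mul_one]

theorem exp_mul_exp_smul_eq_exp_add_smul (h : a * b - b * a = σ • b)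
    (hσ : Complex.exp (-σ) ≠ 1) (β : ℂ) :
    exp a * exp (β • b) = exp (a + (σ / (1 - Complex.exp (-σ)) * β) • b) := by
  let : NormedAlgebra ℚ A := .restrictScalars ℚ ℂ A
  obtain ⟨l, hl⟩ : ∃ l, β = l * (Complex.exp (-σ) - 1) :=
    ⟨β / _, (div_mul_cancel₀ β (sub_ne_zero.mpr hσ)).symm⟩
  have hlb : a * (l • b) - (l • b) * a = σ • (l • b) := by
    rw [mul_smul_comm, smul_mul_assoc, ← smul_sub, h, smul_comm]
  have hconj : exp (l • b) * exp a =
      exp (a + (σ / (1 - Complex.exp (-σ)) * β) • b) * exp (l • b) := by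
    refine SemiconjBy.exp_right ?_
    rw [SemiconjBy, exp_mul_eq_sub_smul_mul_exp hlb, smul_smul, sub_eq_add_neg, ← neg_smul, hl]
    congr 4
    field_simp [sub_ne_zero.mpr hσ.symm]
    ring
  calc exp a * exp (β • b) = exp a * exp ((Complex.exp (-σ) * l) • b) * exp ((-l) • b) := by
        rw [mul_assoc, ← exp_add_of_commute (((Commute.refl b).smul_left _).smul_right _),
          ← add_smul, hl]
        congr 3
        ring
    _ = exp (l • b) * exp a * exp ((-l) • b) := by
        rw [exp_mul_exp_smul_eq_exp_smul_mul_exp h, ← mul_assoc, ← Complex.exp_add,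
          add_neg_cancel, Complex.exp_zero, one_mul]
    _ = _ := by
        rw [hconj, mul_assoc, neg_smul, exp_mul_exp_neg, mul_one]

end

theorem bch_product_general {A : Type*} [NormedRing A] [NormedAlgebra ℂ A] [CompleteSpace A]
    (X Y : A) (s : ℂ) (h : X * Y - Y * X = s • Y) (α β : ℂ)
    (hα : Complex.exp (-α * s) ≠ 1) :
    NormedSpace.exp (α • X) * NormedSpace.exp (β • Y) =
      NormedSpace.exp (α • X + ((α * s / (1 - Complex.exp (-α * s))) * β) • Y) := by
  rw [neg_mul] at hα ⊢
  refine exp_mul_exp_smul_eq_exp_add_smul ?_ hα β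
  rw [smul_mul_assoc, mul_smul_comm, ← smul_sub, h, smul_smul]

/-- Second BCH-type formula of Lemma 5.7: in a complex Banach algebra, if
`X * Y - Y * X = s • Y` with `s ≠ 0`, and `e^{-αs} ≠ 1`, then
`exp(α • X) * exp(β • Y) = exp(α • X + (αs/(1 - e^{-αs})) β • Y)`. -/
theorem bch_product {A : Type*} [NormedRing A] [NormedAlgebra ℂ A] [CompleteSpace A]
    (X Y : A) (s : ℂ) (h : X * Y - Y * X = s • Y) (hs : s ≠ 0) (α β : ℂ)
    (hα : Complex.exp (-α * s) ≠ 1) :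
    NormedSpace.exp (α • X) * NormedSpace.exp (β • Y) =
      NormedSpace.exp (α • X + ((α * s / (1 - Complex.exp (-α * s))) * β) • Y) :=
  bch_product_general X Y s h α β hα
end

section
/- Let A be a complex Banach algebra and let X, Y ∈ A satisfy X*Y − Y*X = s • Y for some constant s ∈ ℂ. Then for all α, β ∈ ℂ one has exp(α • X) * exp(β • Y) * exp(−α • X) = exp((β * Complex.exp (α * s)) • Y). -/
/-!
From `X * Y - Y * X = s • Y` one gets `Y * (α • X + (α * s) • 1) = (α • X) * Y`; exponentiating
and splitting off the central factor `exp (α * s)` gives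
`exp (α • X) * Y * exp (-α • X) = exp (α * s) • Y`. Conjugation by the unit `exp (α • X)` commutes
with `exp`, so it sends `exp (β • Y)` to `exp ((β * exp (α * s)) • Y)`.
-/

open NormedSpace

theorem semiconjBy_smul_add_smul_one_of_commutator_eq_smul {R A : Type*} [CommRing R] [Ring A]
    [Algebra R A] {X Y : A} {s : R} (h : X * Y - Y * X = s • Y) (α : R) :
    SemiconjBy Y (α • X + (α * s) • 1) (α • X) := by
  rw [SemiconjBy, mul_add, mul_smul_comm, mul_smul_comm, mul_one, smul_mul_assoc, ← smul_smul,
    ← smul_add, ← h, add_sub_cancel]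

section
variable {A : Type*} [NormedRing A] [NormedAlgebra ℂ A] [CompleteSpace A]

theorem exp_add_smul_one (a : A) (c : ℂ) : exp (a + c • 1) = Complex.exp c • exp a := by
  let _ : NormedAlgebra ℚ A := NormedAlgebra.restrictScalars ℚ ℂ A
  rw [exp_add_of_commute ((Commute.one_right a).smul_right c), ← Algebra.algebraMap_eq_smul_one,
    ← algebraMap_exp_comm, Complex.exp_eq_exp_ℂ, Algebra.algebraMap_eq_smul_one, mul_smul_one]

theorem exp_smul_mul_mul_exp_neg_smul_of_commutator_eq_smul {X Y : A} {s : ℂ}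
    (h : X * Y - Y * X = s • Y) (α : ℂ) :
    exp (α • X) * Y * exp (-α • X) = Complex.exp (α * s) • Y := by
  let _ : NormedAlgebra ℚ A := NormedAlgebra.restrictScalars ℚ ℂ A
  let _ := invertibleExp (α • X)
  have hY : exp (α • X) * Y = Complex.exp (α * s) • (Y * exp (α • X)) := by
    rw [← (semiconjBy_smul_add_smul_one_of_commutator_eq_smul h α).exp_right.eq,
      exp_add_smul_one, mul_smul_comm]
  rw [hY, smul_mul_assoc, mul_assoc, neg_smul, ← invOf_exp, mul_invOf_self, mul_one]

end

/-- Third BCH-type formula of Lemma 5.7: in a complex Banach algebra, if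
`X * Y - Y * X = s • Y` then
`exp(α • X) * exp(β • Y) * exp(-α • X) = exp((β e^{αs}) • Y)`. -/
theorem bch_exp_conjugation {A : Type*} [NormedRing A] [NormedAlgebra ℂ A] [CompleteSpace A]
    (X Y : A) (s : ℂ) (h : X * Y - Y * X = s • Y) (α β : ℂ) :
    NormedSpace.exp (α • X) * NormedSpace.exp (β • Y) * NormedSpace.exp (-α • X) =
      NormedSpace.exp ((β * Complex.exp (α * s)) • Y) := by
  let _ : NormedAlgebra ℚ A := NormedAlgebra.restrictScalars ℚ ℂ A
  let _ := invertibleExp (α • X)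
  have hconj := exp_units_conj (unitOfInvertible (exp (α • X))) (β • Y)
  rw [val_unitOfInvertible, val_inv_unitOfInvertible, invOf_exp, ← neg_smul] at hconj
  rw [← hconj, mul_smul_comm, smul_mul_assoc,
    exp_smul_mul_mul_exp_neg_smul_of_commutator_eq_smul h, smul_smul, mul_comm]
end

section
/- Let U be a complex Banach space and let X, Y be bounded linear operators on U satisfying X ∘ Y − Y ∘ X = Y and exp((2·π·Complex.I) • X) = 1. Fix m ∈ ℂ. For A = (a, b; c, d) ∈ SL₂(ℤ) and τ ∈ ℍ write A·τ = (aτ+b)/(cτ+d), and define (cτ+d)^X := exp((Complex.log (c*τ+d)) • X) using the principal branch of the complex logarithm. On functions F : ℍ × ℂ × U → ℂ define [F · A](τ, z, u) = exp( −2·π·Complex.I · m · c · z^2/(c*τ+d) ) · F( A·τ , z/(c*τ+d) , (cτ+d)^X ( exp( (−(c*z)/(c*τ+d)) • Y ) u ) ). Then this defines a right action of SL₂(ℤ): for all A, B ∈ SL₂(ℤ) and all (τ, z, u), one has [(F · A) · B](τ, z, u) = [F · (A*B)](τ, z, u). -/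
open UpperHalfPlane
open scoped MatrixGroups Real

/-- The combined action of equation (1.1):
`[F · A](τ, z, u) = exp(-2πi m c z²/(cτ+d)) ·
  F(A·τ, z/(cτ+d), (cτ+d)^X (exp(-(cz/(cτ+d)) • Y) u))`,
where `(cτ+d)^X = exp(log(cτ+d) • X)` via the principal branch of log. -/
noncomputable def combinedSlash {U : Type*} [NormedAddCommGroup U] [NormedSpace ℂ U]
    [CompleteSpace U] (X Y : U →L[ℂ] U) (m : ℂ) (F : ℍ → ℂ → U → ℂ)
    (A : Matrix.SpecialLinearGroup (Fin 2) ℤ) : ℍ → ℂ → U → ℂ :=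
  fun τ z u =>
    Complex.exp (-2 * (π : ℂ) * Complex.I * m * ((A 1 0 : ℤ) : ℂ) * z ^ 2 /
        (((A 1 0 : ℤ) : ℂ) * (τ : ℂ) + ((A 1 1 : ℤ) : ℂ))) *
      F (A • τ) (z / (((A 1 0 : ℤ) : ℂ) * (τ : ℂ) + ((A 1 1 : ℤ) : ℂ)))
        ((NormedSpace.exp
            (Complex.log (((A 1 0 : ℤ) : ℂ) * (τ : ℂ) + ((A 1 1 : ℤ) : ℂ)) • X))
          ((NormedSpace.exp
              ((-(((A 1 0 : ℤ) : ℂ) * z) /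
                  (((A 1 0 : ℤ) : ℂ) * (τ : ℂ) + ((A 1 1 : ℤ) : ℂ))) • Y)) u))

/-!
Write `j(A, τ) = cτ + d` and `j^X = exp(log j • X)`. The relation `XY - YX = Y` gives
`j^X exp(t • Y) = exp(j t • Y) j^X`, which moves the `Y`-exponential of `A` past `j(B, τ)^X`;
and `exp(2πi • X) = 1` makes `j ↦ j^X` multiplicative, although the principal branch of `log` is
not. The operator factors of `A` and `B` thus combine into that of `AB`, and what is left are
scalar identities, all consequences of `j(AB, τ) = j(A, Bτ) j(B, τ)` and
`c_{AB} / j(AB, τ) = c_B / j(B, τ) + c_A / (j(A, Bτ) j(B, τ)²)`.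
-/

open NormedSpace

section BanachAlgebra

variable {𝔸 : Type*} [NormedRing 𝔸] [NormedAlgebra ℂ 𝔸] [CompleteSpace 𝔸] {X Y : 𝔸}

theorem exp_smul_mul_of_mul_sub_mul_eq (h : X * Y - Y * X = Y) (s : ℂ) :
    exp (s • X) * Y = Complex.exp s • (Y * exp (s • X)) := by
  let +nondep : NormedAlgebra ℚ 𝔸 := .restrictScalars ℚ ℂ 𝔸
  have hY : SemiconjBy Y (s • (X + 1)) (s • X) := by
    rw [SemiconjBy, mul_smul_comm, smul_mul_assoc, mul_add, mul_one, sub_eq_iff_eq_add.mp h,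
      add_comm]
  have hX1 : exp (s • (X + 1)) = Complex.exp s • exp (s • X) := by
    rw [smul_add, exp_add_of_commute ((Commute.one_right X).smul_left s |>.smul_right s),
      ← Algebra.algebraMap_eq_smul_one, ← algebraMap_exp_comm, ← Complex.exp_eq_exp_ℂ,
      Algebra.algebraMap_eq_smul_one, mul_smul_one]
  rw [← hY.exp_right, hX1, mul_smul_comm]

theorem exp_smul_mul_exp_smul_of_mul_sub_mul_eq (h : X * Y - Y * X = Y) (s t : ℂ) :
    exp (s • X) * exp (t • Y) = exp ((Complex.exp s * t) • Y) * exp (s • X) := by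
  have hY : SemiconjBy (exp (s • X)) (t • Y) ((Complex.exp s * t) • Y) := by
    rw [SemiconjBy, mul_smul_comm, exp_smul_mul_of_mul_sub_mul_eq h, smul_smul, smul_mul_assoc,
      mul_comm t]
  let +nondep : NormedAlgebra ℚ 𝔸 := .restrictScalars ℚ ℂ 𝔸
  exact hY.exp_right

theorem periodic_exp_smul (hX : exp ((2 * π * Complex.I : ℂ) • X) = 1) :
    Function.Periodic (fun s : ℂ ↦ exp (s • X)) (2 * π * Complex.I) := fun s ↦ by
  let +nondep : NormedAlgebra ℚ 𝔸 := .restrictScalars ℚ ℂ 𝔸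
  simp only [add_smul, exp_add_of_commute ((Commute.refl X).smul_left s |>.smul_right _), hX,
    mul_one]

theorem exp_smul_eq_of_exp_eq (hX : exp ((2 * π * Complex.I : ℂ) • X) = 1) {s t : ℂ}
    (hst : Complex.exp s = Complex.exp t) : exp (s • X) = exp (t • X) := by
  obtain ⟨n, rfl⟩ := Complex.exp_eq_exp_iff_exists_int.mp hst
  exact (periodic_exp_smul hX).int_mul n t

theorem exp_log_mul_smul (hX : exp ((2 * π * Complex.I : ℂ) • X) = 1) {j₁ j₂ : ℂ}
    (h₁ : j₁ ≠ 0) (h₂ : j₂ ≠ 0) :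
    exp (Complex.log (j₁ * j₂) • X) =
      exp (Complex.log j₁ • X) * exp (Complex.log j₂ • X) := by
  let +nondep : NormedAlgebra ℚ 𝔸 := .restrictScalars ℚ ℂ 𝔸
  rw [← exp_add_of_commute ((Commute.refl X).smul_left _ |>.smul_right _), ← add_smul]
  refine exp_smul_eq_of_exp_eq hX ?_
  rw [Complex.exp_add, Complex.exp_log h₁, Complex.exp_log h₂,
    Complex.exp_log (mul_ne_zero h₁ h₂)]

theorem exp_log_smul_mul_exp_smul_cocycle (hXY : X * Y - Y * X = Y)
    (hX : exp ((2 * π * Complex.I : ℂ) • X) = 1) {j₁ j₂ : ℂ} (h₁ : j₁ ≠ 0) (h₂ : j₂ ≠ 0)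
    (s t : ℂ) :
    exp (Complex.log j₁ • X) * exp (s • Y) * (exp (Complex.log j₂ • X) * exp (t • Y)) =
      exp (Complex.log (j₁ * j₂) • X) * exp ((s / j₂ + t) • Y) := by
  let +nondep : NormedAlgebra ℚ 𝔸 := .restrictScalars ℚ ℂ 𝔸
  have hswap : exp (s • Y) * exp (Complex.log j₂ • X) =
      exp (Complex.log j₂ • X) * exp ((s / j₂) • Y) := by
    rw [exp_smul_mul_exp_smul_of_mul_sub_mul_eq hXY, Complex.exp_log h₂, mul_div_cancel₀ _ h₂]
  rw [exp_log_mul_smul hX h₁ h₂, add_smul,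
    exp_add_of_commute ((Commute.refl Y).smul_left _ |>.smul_right _), mul_assoc,
    ← mul_assoc (exp (s • Y)), hswap]
  simp only [mul_assoc]

end BanachAlgebra

section ModularGroup

open ModularGroup

theorem intCast_lowerRow_eq_denom (A : SL(2, ℤ)) (τ : ℍ) :
    ((A 1 0 : ℤ) : ℂ) * τ + ((A 1 1 : ℤ) : ℂ) = denom A τ := by
  simp [denom_apply]

theorem denom_cocycle_SL (A B : SL(2, ℤ)) (τ : ℍ) :
    denom (A * B : SL(2, ℤ)) τ = denom A (B • τ : ℍ) * denom B τ := by
  rw [map_mul, map_mul, denom_cocycle _ _ τ.im_ne_zero, sl_moeb, coe_smul_of_det_pos]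
  simp

theorem lowerLeft_mul_mul_denom_sub (A B : SL(2, ℤ)) (τ : ℍ) :
    (((A * B) 1 0 : ℤ) : ℂ) * denom B τ -
        ((B 1 0 : ℤ) : ℂ) * denom (A * B : SL(2, ℤ)) τ = ((A 1 0 : ℤ) : ℂ) := by
  have hdet : ((B 0 0 * B 1 1 - B 0 1 * B 1 0 : ℤ) : ℂ) = 1 := by
    rw [← Matrix.det_fin_two, B.det_coe, Int.cast_one]
  simp only [← intCast_lowerRow_eq_denom, Matrix.SpecialLinearGroup.coe_mul, Matrix.mul_apply,
    Fin.sum_univ_two]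
  push_cast at *
  linear_combination ((A 1 0 : ℤ) : ℂ) * hdet

/-- The `τ`-derivative of the logarithm of `denom_cocycle_SL`. -/
theorem lowerLeft_mul_div_denom (A B : SL(2, ℤ)) (τ : ℍ) :
    (((A * B) 1 0 : ℤ) : ℂ) / (denom A (B • τ : ℍ) * denom B τ) =
      ((B 1 0 : ℤ) : ℂ) / denom B τ +
        ((A 1 0 : ℤ) : ℂ) / (denom A (B • τ : ℍ) * denom B τ ^ 2) := by
  have hB := denom_ne_zero B τ
  have hA := denom_ne_zero A (B • τ : ℍ)
  have h := lowerLeft_mul_mul_denom_sub A B τ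
  rw [denom_cocycle_SL] at h
  field_simp
  linear_combination h

end ModularGroup

/-- If `X ∘ Y - Y ∘ X = Y` and `exp(2πi • X) = 1`, then the combined slash
action with quadratic multiplier is a right action of `SL₂(ℤ)` on functions
`F : ℍ × ℂ × U → ℂ`. -/
theorem combinedSlash_right_action {U : Type*} [NormedAddCommGroup U] [NormedSpace ℂ U]
    [CompleteSpace U] (X Y : U →L[ℂ] U)
    (hXY : X * Y - Y * X = Y)
    (hX : NormedSpace.exp (((2 * (π : ℂ) * Complex.I)) • X) = 1)
    (m : ℂ) (F : ℍ → ℂ → U → ℂ) (A B : Matrix.SpecialLinearGroup (Fin 2) ℤ)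
    (τ : ℍ) (z : ℂ) (u : U) :
    combinedSlash X Y m (combinedSlash X Y m F A) B τ z u =
      combinedSlash X Y m F (A * B) τ z u := by
  simp only [combinedSlash, intCast_lowerRow_eq_denom, denom_cocycle_SL, mul_smul A B τ]
  set jA := denom A (B • τ : ℍ)
  set jB := denom B τ
  set cA := ((A 1 0 : ℤ) : ℂ)
  set cB := ((B 1 0 : ℤ) : ℂ)
  have hc : (((A * B) 1 0 : ℤ) : ℂ) / (jA * jB) = cB / jB + cA / (jA * jB ^ 2) :=
    lowerLeft_mul_div_denom A B τ
  have hop := congrArg (· u) <| exp_log_smul_mul_exp_smul_cocycle hXY hX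
    (denom_ne_zero A (B • τ : ℍ)) (denom_ne_zero B τ) (-(cA * (z / jB)) / jA) (-(cB * z) / jB)
  simp only [mul_apply_eq_comp] at hop
  rw [hop, ← mul_assoc, ← Complex.exp_add]
  congr 2
  · linear_combination (2 * π * Complex.I * m * z ^ 2) * hc
  · rw [div_div, mul_comm]
  · congr 4
    linear_combination z * hc
end
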